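/- arXiv:2010.05891 — 4 statements merged into one kernel-verified Lean document; each statement's English description precedes it below -/
import Mathlib

section
/- Suppose that for every x ∈ ℝ^n and every k ∈ ℕ there exists a minimizer (ξ_0(x,k),…,ξ_N(x,k); ν_0(x,k),…,ν_{N−1}(x,k)) of V2(x,k) and a constant c > 0 (independent of x, k and ε) such that Γ(x) ≥ c (Σ_{i=0}^{N−1} ‖ξ_i(x,k)‖² + ‖ν_i(x,k)‖²). Then there exists ρ > 0 such that for all x ∈ ℝ^n, all k ∈ ℕ, and all ε > 0, the terminal state x_N(x,k,ε) of a minimizer of V1(x,k,ε) satisfies x_N(x,k,ε)ᵀ Q_N x_N(x,k,ε) ≤ V2(x,k) + ε ρ. -/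
/-
If `Γ(x) = 0`, the Γ-dominated minimizer `ν` of V2 vanishes on the horizon, so comparing the
minimizer `u` of V1 with `ν` forces `u = 0` as well, and both controls steer to the same
terminal state. If `Γ(x) > 0`, comparing `u` with `ν` in V1 gives
`(Γ/ε)(x_NᵀQ_Nx_N − V2) ≤ ∑ ξ_iᵀQξ_i + ν_iᵀRν_i ≤ M ∑ ‖ξ_i‖² + ‖ν_i‖² ≤ (M/c) Γ`,
where `M = ∑|Q_ij| + ∑|R_ij|` bounds the quadratic forms of `Q` and `R` in the sup norm;
dividing by `Γ/ε` gives the bound with `ρ = M/c`, enlarged to `M/c + 1` to make it positive.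
-/

open Matrix Filter Topology

/-- The predicted state `x_i` of the receding horizon problems:
`x_0 = x` and `x_{i+1} = A_{i+1}(k) x + ∑_{l=0}^{i} B_{i-l}(k) u_l`. -/
def traj {n q : ℕ} (A : ℕ → ℕ → Matrix (Fin n) (Fin n) ℝ)
    (B : ℕ → ℕ → Matrix (Fin n) (Fin q) ℝ) (k : ℕ) (x : Fin n → ℝ)
    (v : ℕ → Fin q → ℝ) : ℕ → Fin n → ℝ
  | 0 => x
  | i + 1 => (A k (i + 1)).mulVec x +
      ∑ l ∈ Finset.range (i + 1), (B k (i - l)).mulVec (v l)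

/-- The terminal cost `ξ_NᵀQ_Nξ_N` of problem V2. -/
noncomputable def cost2 {n q : ℕ} (QN : Matrix (Fin n) (Fin n) ℝ)
    (A : ℕ → ℕ → Matrix (Fin n) (Fin n) ℝ)
    (B : ℕ → ℕ → Matrix (Fin n) (Fin q) ℝ) (N k : ℕ) (x : Fin n → ℝ)
    (v : ℕ → Fin q → ℝ) : ℝ :=
  traj A B k x v N ⬝ᵥ QN.mulVec (traj A B k x v N)

/-- The cost `∑_{i<N} x_iᵀQx_i + u_iᵀRu_i + (Γ(x)/ε)·x_NᵀQ_N x_N` of problem V1. -/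
noncomputable def cost1 {n q : ℕ} (Q : Matrix (Fin n) (Fin n) ℝ)
    (R : Matrix (Fin q) (Fin q) ℝ) (QN : Matrix (Fin n) (Fin n) ℝ)
    (Γ : (Fin n → ℝ) → ℝ)
    (A : ℕ → ℕ → Matrix (Fin n) (Fin n) ℝ)
    (B : ℕ → ℕ → Matrix (Fin n) (Fin q) ℝ) (N k : ℕ) (x : Fin n → ℝ)
    (ε : ℝ) (u : ℕ → Fin q → ℝ) : ℝ :=
  (∑ i ∈ Finset.range N,
    (traj A B k x u i ⬝ᵥ Q.mulVec (traj A B k x u i) + u i ⬝ᵥ R.mulVec (u i)))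
  + (Γ x / ε) * (traj A B k x u N ⬝ᵥ QN.mulVec (traj A B k x u N))

open Finset

lemma dotProduct_mulVec_self_le {m : Type*} [Fintype m] (M : Matrix m m ℝ) (x : m → ℝ) :
    x ⬝ᵥ M *ᵥ x ≤ (∑ i, ∑ j, |M i j|) * ‖x‖ ^ 2 := by
  simp only [dotProduct, Matrix.mulVec, sum_mul, mul_sum]
  refine sum_le_sum fun i _ => sum_le_sum fun j _ => ?_
  have hi : |x i| ≤ ‖x‖ := by simpa using norm_le_pi_norm x i
  have hj : |x j| ≤ ‖x‖ := by simpa using norm_le_pi_norm x j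
  calc x i * (M i j * x j) ≤ |M i j| * (|x i| * |x j|) := by
        rw [mul_left_comm, ← abs_mul, ← abs_mul]; exact le_abs_self _
    _ ≤ |M i j| * ‖x‖ ^ 2 := by
        rw [sq]; gcongr

lemma Matrix.PosSemidef.dotProduct_mulVec_self_nonneg {m : Type*} [Fintype m]
    {M : Matrix m m ℝ} (hM : M.PosSemidef) (x : m → ℝ) : 0 ≤ x ⬝ᵥ M *ᵥ x := by
  simpa using hM.dotProduct_mulVec_nonneg x

lemma Matrix.PosDef.dotProduct_mulVec_self_pos {m : Type*} [Fintype m]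
    {M : Matrix m m ℝ} (hM : M.PosDef) {x : m → ℝ} (hx : x ≠ 0) : 0 < x ⬝ᵥ M *ᵥ x := by
  simpa using hM.dotProduct_mulVec_pos hx

section Horizon

variable {n q : ℕ} (Q : Matrix (Fin n) (Fin n) ℝ) (R : Matrix (Fin q) (Fin q) ℝ)
  (A : ℕ → ℕ → Matrix (Fin n) (Fin n) ℝ) (B : ℕ → ℕ → Matrix (Fin n) (Fin q) ℝ)
  (N k : ℕ) (x : Fin n → ℝ)

lemma traj_congr {u v : ℕ → Fin q → ℝ} {i : ℕ} (h : ∀ l < i, u l = v l) :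
    traj A B k x u i = traj A B k x v i := by
  cases i with
  | zero => rfl
  | succ i =>
    simp only [traj]
    exact congrArg _ (sum_congr rfl fun l hl => by rw [h l (mem_range.1 hl)])

noncomputable def stageCost (u : ℕ → Fin q → ℝ) : ℝ :=
  ∑ i ∈ range N, (traj A B k x u i ⬝ᵥ Q *ᵥ traj A B k x u i + u i ⬝ᵥ R *ᵥ u i)

noncomputable def trajSqNorm (u : ℕ → Fin q → ℝ) : ℝ :=
  ∑ i ∈ range N, (‖traj A B k x u i‖ ^ 2 + ‖u i‖ ^ 2)

lemma cost1_eq_stageCost_add (QN : Matrix (Fin n) (Fin n) ℝ) (Γ : (Fin n → ℝ) → ℝ) (ε : ℝ)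
    (u : ℕ → Fin q → ℝ) :
    cost1 Q R QN Γ A B N k x ε u = stageCost Q R A B N k x u + Γ x / ε * cost2 QN A B N k x u :=
  rfl

lemma trajSqNorm_nonneg (u : ℕ → Fin q → ℝ) : 0 ≤ trajSqNorm A B N k x u :=
  sum_nonneg fun _ _ => by positivity

variable {Q R}

lemma stageCost_nonneg (hQ : Q.PosSemidef) (hR : R.PosSemidef) (u : ℕ → Fin q → ℝ) :
    0 ≤ stageCost Q R A B N k x u :=
  sum_nonneg fun _ _ => add_nonneg (hQ.dotProduct_mulVec_self_nonneg _)
    (hR.dotProduct_mulVec_self_nonneg _)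

lemma stageCost_le (u : ℕ → Fin q → ℝ) :
    stageCost Q R A B N k x u
      ≤ ((∑ i, ∑ j, |Q i j|) + ∑ i, ∑ j, |R i j|) * trajSqNorm A B N k x u := by
  rw [trajSqNorm, mul_sum]
  refine sum_le_sum fun i _ => ?_
  have hQi := dotProduct_mulVec_self_le Q (traj A B k x u i)
  have hRi := dotProduct_mulVec_self_le R (u i)
  have hQ0 : 0 ≤ ∑ i, ∑ j, |Q i j| := by positivity
  have hR0 : 0 ≤ ∑ i, ∑ j, |R i j| := by positivity
  nlinarith [norm_nonneg (traj A B k x u i), norm_nonneg (u i)]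

lemma eq_zero_of_stageCost_nonpos (hQ : Q.PosSemidef) (hR : R.PosDef) {u : ℕ → Fin q → ℝ}
    (h : stageCost Q R A B N k x u ≤ 0) : ∀ l < N, u l = 0 := by
  have hterms := (sum_eq_zero_iff_of_nonneg fun i _ => add_nonneg
    (hQ.dotProduct_mulVec_self_nonneg (traj A B k x u i))
    (hR.posSemidef.dotProduct_mulVec_self_nonneg (u i))).1
    (h.antisymm (stageCost_nonneg A B N k x hQ hR.posSemidef u))
  intro l hl
  by_contra hne
  have := hterms l (mem_range.2 hl)
  linarith [hQ.dotProduct_mulVec_self_nonneg (traj A B k x u l),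
    hR.dotProduct_mulVec_self_pos hne]

lemma eq_zero_of_trajSqNorm_nonpos {u : ℕ → Fin q → ℝ} (h : trajSqNorm A B N k x u ≤ 0) :
    ∀ l < N, u l = 0 := by
  intro l hl
  have hterm := single_le_sum (f := fun i => ‖traj A B k x u i‖ ^ 2 + ‖u i‖ ^ 2)
    (fun i _ => by positivity) (mem_range.2 hl)
  have hsq : ‖u l‖ ^ 2 ≤ 0 := by
    nlinarith [sq_nonneg ‖traj A B k x u l‖, (hterm.trans h : _ ≤ (0 : ℝ))]
  simpa using hsq

variable {QN : Matrix (Fin n) (Fin n) ℝ} {Γ : (Fin n → ℝ) → ℝ} {ε : ℝ}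

lemma cost2_le_of_forall_cost1_le (hQ : Q.PosSemidef) (hR : R.PosDef) {c : ℝ} (hc : 0 < c)
    (hε : 0 < ε) {u : ℕ → Fin q → ℝ}
    (hu : ∀ u', cost1 Q R QN Γ A B N k x ε u ≤ cost1 Q R QN Γ A B N k x ε u')
    {w : ℕ → Fin q → ℝ} (hw : c * trajSqNorm A B N k x w ≤ Γ x) :
    cost2 QN A B N k x u
      ≤ cost2 QN A B N k x w + ε * (((∑ i, ∑ j, |Q i j|) + ∑ i, ∑ j, |R i j|) / c) := by
  set M := (∑ i, ∑ j, |Q i j|) + ∑ i, ∑ j, |R i j|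
  have hM : 0 ≤ M := by positivity
  have hcmp := hu w
  rw [cost1_eq_stageCost_add, cost1_eq_stageCost_add] at hcmp
  have hSu := stageCost_nonneg A B N k x hQ hR.posSemidef u
  have hSw : stageCost Q R A B N k x w ≤ M * trajSqNorm A B N k x w := stageCost_le A B N k x w
  have hS := trajSqNorm_nonneg A B N k x w
  rcases (show 0 ≤ Γ x by nlinarith).eq_or_lt with hΓ | hΓ
  · have hw0 := eq_zero_of_trajSqNorm_nonpos A B N k x
      (by nlinarith : trajSqNorm A B N k x w ≤ 0)
    have hu0 := eq_zero_of_stageCost_nonpos A B N k x hQ hR (u := u)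
      (by simp only [← hΓ, zero_div, zero_mul, add_zero] at hcmp; nlinarith)
    have hterm : cost2 QN A B N k x u = cost2 QN A B N k x w := by
      rw [cost2, cost2, traj_congr A B k x fun l hl => (hu0 l hl).trans (hw0 l hl).symm]
    rw [hterm]
    exact le_add_of_nonneg_right (by positivity)
  · have hscaled : Γ x / ε * (cost2 QN A B N k x u - cost2 QN A B N k x w)
        ≤ Γ x / ε * (ε * (M / c)) :=
      calc Γ x / ε * (cost2 QN A B N k x u - cost2 QN A B N k x w)
          ≤ stageCost Q R A B N k x w := by linarith
        _ ≤ M * trajSqNorm A B N k x w := hSw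
        _ ≤ M * (Γ x / c) := by gcongr; rw [le_div_iff₀ hc]; linarith
        _ = Γ x / ε * (ε * (M / c)) := by field_simp
    linarith [le_of_mul_le_mul_left hscaled (by positivity)]

end Horizon

theorem stmt4_general (n q N : ℕ)
    (Q : Matrix (Fin n) (Fin n) ℝ) (R : Matrix (Fin q) (Fin q) ℝ)
    (QN : Matrix (Fin n) (Fin n) ℝ)
    (hQ : Q.PosDef) (hR : R.PosDef)
    (Γ : (Fin n → ℝ) → ℝ)
    (A : ℕ → ℕ → Matrix (Fin n) (Fin n) ℝ)
    (B : ℕ → ℕ → Matrix (Fin n) (Fin q) ℝ)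
    -- hypothesis: a minimizer of V2 exists whose size is dominated by Γ,
    -- with constant c independent of x, k, ε
    (hΓbig : ∃ c : ℝ, 0 < c ∧ ∀ (x : Fin n → ℝ) (k : ℕ),
      ∃ v : ℕ → Fin q → ℝ,
        (∀ v' : ℕ → Fin q → ℝ, cost2 QN A B N k x v ≤ cost2 QN A B N k x v') ∧
        c * (∑ i ∈ Finset.range N, (‖traj A B k x v i‖ ^ 2 + ‖v i‖ ^ 2)) ≤ Γ x) :
    ∃ ρ : ℝ, 0 < ρ ∧
      ∀ (x : Fin n → ℝ) (k : ℕ) (ε : ℝ), 0 < ε →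
        ∀ u : ℕ → Fin q → ℝ,
          (∀ u' : ℕ → Fin q → ℝ,
            cost1 Q R QN Γ A B N k x ε u ≤ cost1 Q R QN Γ A B N k x ε u') →
          ∀ v : ℕ → Fin q → ℝ,
            (∀ v' : ℕ → Fin q → ℝ, cost2 QN A B N k x v ≤ cost2 QN A B N k x v') →
            traj A B k x u N ⬝ᵥ QN.mulVec (traj A B k x u N)
              ≤ cost2 QN A B N k x v + ε * ρ := by
  obtain ⟨c, hc, hmin⟩ := hΓbig
  refine ⟨((∑ i, ∑ j, |Q i j|) + ∑ i, ∑ j, |R i j|) / c + 1, by positivity, ?_⟩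
  intro x k ε hε u hu v hv
  obtain ⟨w, hwmin, hw⟩ := hmin x k
  have hvw : cost2 QN A B N k x v = cost2 QN A B N k x w := (hv w).antisymm (hwmin v)
  have hterm := cost2_le_of_forall_cost1_le A B N k x hQ.posSemidef hR hc hε hu hw
  change cost2 QN A B N k x u ≤ _
  rw [hvw]
  linarith

/-- Lemma 3 of the paper: if `Γ(x) ≥ c(∑ ‖ξ_i‖² + ‖ν_i‖²)` for a
minimizer of V2, then there is `ρ > 0` such that the terminal state of any
minimizer of V1 satisfies `x_NᵀQ_N x_N ≤ V2(x,k) + ερ` for all `x, k, ε > 0`. -/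
theorem stmt4 (n q N : ℕ) (hN : 0 < N)
    (Q : Matrix (Fin n) (Fin n) ℝ) (R : Matrix (Fin q) (Fin q) ℝ)
    (QN : Matrix (Fin n) (Fin n) ℝ)
    (hQ : Q.PosDef) (hR : R.PosDef) (hQN : QN.PosDef)
    (Γ : (Fin n → ℝ) → ℝ) (hΓ : ∀ x, 0 ≤ Γ x)
    (A : ℕ → ℕ → Matrix (Fin n) (Fin n) ℝ)
    (B : ℕ → ℕ → Matrix (Fin n) (Fin q) ℝ)
    (hA0 : ∀ k, A k 0 = 1)
    -- hypothesis: a minimizer of V2 exists whose size is dominated by Γ,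
    -- with constant c independent of x, k, ε
    (hΓbig : ∃ c : ℝ, 0 < c ∧ ∀ (x : Fin n → ℝ) (k : ℕ),
      ∃ v : ℕ → Fin q → ℝ,
        (∀ v' : ℕ → Fin q → ℝ, cost2 QN A B N k x v ≤ cost2 QN A B N k x v') ∧
        c * (∑ i ∈ Finset.range N, (‖traj A B k x v i‖ ^ 2 + ‖v i‖ ^ 2)) ≤ Γ x) :
    ∃ ρ : ℝ, 0 < ρ ∧
      ∀ (x : Fin n → ℝ) (k : ℕ) (ε : ℝ), 0 < ε →
        ∀ u : ℕ → Fin q → ℝ,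
          (∀ u' : ℕ → Fin q → ℝ,
            cost1 Q R QN Γ A B N k x ε u ≤ cost1 Q R QN Γ A B N k x ε u') →
          ∀ v : ℕ → Fin q → ℝ,
            (∀ v' : ℕ → Fin q → ℝ, cost2 QN A B N k x v ≤ cost2 QN A B N k x v') →
            traj A B k x u N ⬝ᵥ QN.mulVec (traj A B k x u N)
              ≤ cost2 QN A B N k x v + ε * ρ :=
  stmt4_general n q N Q R QN hQ hR Γ A B hΓbig
end

section
/- Let g: ℝ^n → ℝ be strictly convex and continuously differentiable, let D(x,y) = g(x) − g(y) − (x − y)ᵀ∇g(y) be the Bregman distance induced by g, and let f: ℝ^n → ℝ be convex and continuously differentiable. Fix y ∈ ℝ^n and suppose x⁺ ∈ ℝ^n minimizes the function x ↦ f(x) + D(x,y) over ℝ^n. Then for every z ∈ ℝ^n, f(z) − f(x⁺) ≥ D(z, x⁺) + D(x⁺, y) − D(z, y). -/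
/-! The minimizer `x⁺` is a critical point of `f + D(·, y)`, so `∇f(x⁺) = ∇g(y) − ∇g(x⁺)`.
By the three-point identity the left-hand side of the claim equals `(∇g(y) − ∇g(x⁺))(z − x⁺)`,
that is `∇f(x⁺)(z − x⁺)`, which is at most `f z − f x⁺` by convexity of `f`. -/

open Filter Topology

/-- The Bregman distance induced by `g`:
`D(x,y) = g(x) − g(y) − (x − y)ᵀ∇g(y)`. -/
noncomputable def breg {E : Type*} [NormedAddCommGroup E] [NormedSpace ℝ E]
    (g : E → ℝ) (x y : E) : ℝ :=
  g x - g y - fderiv ℝ g y (x - y)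

section

variable {E : Type*} [NormedAddCommGroup E] [NormedSpace ℝ E]

theorem ConvexOn.apply_sub_le_sub_of_hasFDerivAt {s : Set E} {f : E → ℝ} {f' : E →L[ℝ] ℝ}
    {a b : E} (hf : ConvexOn ℝ s f) (ha : a ∈ s) (hb : b ∈ s) (hf' : HasFDerivAt f f' a) :
    f' (b - a) ≤ f b - f a := by
  have hline : ConvexOn ℝ (Set.Icc 0 1) (f ∘ AffineMap.lineMap (k := ℝ) a b) :=
    (hf.comp_affineMap _).subset (fun t ht => hf.1.lineMap_mem ha hb ht) (convex_Icc 0 1)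
  have hderiv : HasDerivAt (f ∘ AffineMap.lineMap (k := ℝ) a b) (f' (b - a)) 0 := by
    refine HasFDerivAt.comp_hasDerivAt (0 : ℝ) ?_ AffineMap.hasDerivAt_lineMap
    simpa using hf'
  simpa [slope] using hline.le_slope_of_hasDerivAt (by simp) (by simp) zero_lt_one hderiv

theorem hasFDerivAt_breg_left {g : E → ℝ} {x : E} (hg : DifferentiableAt ℝ g x) (y : E) :
    HasFDerivAt (fun x => breg g x y) (fderiv ℝ g x - fderiv ℝ g y) x := by
  have hlin : HasFDerivAt (fun x => fderiv ℝ g y (x - y)) (fderiv ℝ g y) x :=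
    (fderiv ℝ g y).hasFDerivAt.comp x ((hasFDerivAt_id x).sub_const y)
  exact (hg.hasFDerivAt.sub_const (g y)).sub hlin

theorem breg_add_breg_sub_breg (g : E → ℝ) (x y z : E) :
    breg g z x + breg g x y - breg g z y = fderiv ℝ g y (z - x) - fderiv ℝ g x (z - x) := by
  have hsplit : fderiv ℝ g y (z - y) = fderiv ℝ g y (z - x) + fderiv ℝ g y (x - y) := by
    rw [← map_add, sub_add_sub_cancel]
  simp only [breg, hsplit]
  ring

end

theorem stmt7_general (n : ℕ) (g f : EuclideanSpace ℝ (Fin n) → ℝ)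
    (hgdiff : ContDiff ℝ 1 g)
    (hfconv : ConvexOn ℝ Set.univ f) (hfdiff : ContDiff ℝ 1 f)
    (y xplus : EuclideanSpace ℝ (Fin n))
    (hmin : ∀ x, f xplus + breg g xplus y ≤ f x + breg g x y) :
    ∀ z, breg g z xplus + breg g xplus y - breg g z y ≤ f z - f xplus := by
  intro z
  have hf : HasFDerivAt f (fderiv ℝ f xplus) xplus :=
    (hfdiff.differentiable one_ne_zero xplus).hasFDerivAt
  have hcrit : fderiv ℝ f xplus + (fderiv ℝ g xplus - fderiv ℝ g y) = 0 :=
    IsLocalMin.hasFDerivAt_eq_zero (Eventually.of_forall hmin)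
      (hf.add (hasFDerivAt_breg_left (hgdiff.differentiable one_ne_zero xplus) y))
  have hcrit_z := congrArg (fun L => L (z - xplus)) hcrit
  simp only [add_apply, sub_apply, zero_apply] at hcrit_z
  calc breg g z xplus + breg g xplus y - breg g z y
      = fderiv ℝ g y (z - xplus) - fderiv ℝ g xplus (z - xplus) := breg_add_breg_sub_breg g _ _ _
    _ = fderiv ℝ f xplus (z - xplus) := by linarith
    _ ≤ f z - f xplus := hfconv.apply_sub_le_sub_of_hasFDerivAt trivial trivial hf

/-- the three-point inequality for the proximal step:
if `x⁺` minimizes `f(·) + D(·, y)`, then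
`f(z) − f(x⁺) ≥ D(z, x⁺) + D(x⁺, y) − D(z, y)` for every `z`. -/
theorem stmt7 (n : ℕ) (g f : EuclideanSpace ℝ (Fin n) → ℝ)
    (hg : StrictConvexOn ℝ Set.univ g) (hgdiff : ContDiff ℝ 1 g)
    (hfconv : ConvexOn ℝ Set.univ f) (hfdiff : ContDiff ℝ 1 f)
    (y xplus : EuclideanSpace ℝ (Fin n))
    (hmin : ∀ x, f xplus + breg g xplus y ≤ f x + breg g x y) :
    ∀ z, breg g z xplus + breg g xplus y - breg g z y ≤ f z - f xplus :=
  stmt7_general n g f hgdiff hfconv hfdiff y xplus hmin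
end

section
/- Let A_c, A_u ∈ ℝ^{n×n} and B_c, B_u ∈ ℝ^{n×q} with q ≤ n; suppose (A_c, B_c) is controllable and (A_u, B_u) is not controllable. For λ ∈ [0,1] set A(λ) = (1−λ)A_u + λA_c and B(λ) = (1−λ)B_u + λB_c. Then for any λ_max ∈ (0,1) there exists λ ∈ (0, λ_max) such that (A(λ), B(λ)) is controllable. In particular, for any choice of 2n²+1 values 0 < λ_1 < λ_2 < … < λ_{2n²+1} < λ_max, there exists i ∈ {1,…,2n²+1} such that (A(λ_i), B(λ_i)) is controllable. -/
open Matrix Polynomial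

/-- The controllability matrix `[B, AB, …, A^{n−1}B]`, with columns indexed by
`Fin n × Fin q`. -/
noncomputable def ctrb {n q : ℕ} (A : Matrix (Fin n) (Fin n) ℝ)
    (B : Matrix (Fin n) (Fin q) ℝ) : Matrix (Fin n) (Fin n × Fin q) ℝ :=
  Matrix.of fun i jl => (A ^ (jl.1 : ℕ) * B) i jl.2

/-- A pair `(A, B)` is controllable if its controllability matrix has rank `n`. -/
def IsControllable {n q : ℕ} (A : Matrix (Fin n) (Fin n) ℝ)
    (B : Matrix (Fin n) (Fin q) ℝ) : Prop :=
  (ctrb A B).rank = n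

lemma aux_rank_iff_det {n : ℕ} (M : Matrix (Fin n) (Fin n) ℝ) :
    M.rank = n ↔ M.det ≠ 0 := by
  constructor
  · intro h hdet
    have hsurj : Function.Surjective M.mulVecLin := by
      rw [← LinearMap.range_eq_top]
      apply Submodule.eq_top_of_finrank_eq
      simpa [Matrix.rank] using h
    have : IsUnit M := Matrix.mulVec_surjective_iff_isUnit.mp
      (by simpa [Matrix.coe_mulVecLin] using hsurj)
    exact absurd (M.isUnit_iff_isUnit_det.mp this) (by simp [hdet])
  · intro hdet
    have : IsUnit M := M.isUnit_iff_isUnit_det.mpr (isUnit_iff_ne_zero.mpr hdet)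
    simpa using Matrix.rank_of_isUnit M this

lemma aux_controllable_iff {n q : ℕ} (A : Matrix (Fin n) (Fin n) ℝ)
    (B : Matrix (Fin n) (Fin q) ℝ) :
    IsControllable A B ↔ (ctrb A B * (ctrb A B)ᵀ).det ≠ 0 := by
  rw [IsControllable, ← aux_rank_iff_det, Matrix.rank_self_mul_transpose]

lemma aux_entry_pow_deg {n : ℕ} (M : Matrix (Fin n) (Fin n) (Polynomial ℝ))
    (h : ∀ i j, (M i j).natDegree ≤ 1) :
    ∀ (k : ℕ) (i j : Fin n), ((M ^ k) i j).natDegree ≤ k := by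
  intro k
  induction k with
  | zero =>
    intro i j
    rw [pow_zero]
    rw [Matrix.one_apply]
    split <;> simp
  | succ k ih =>
    intro i j
    rw [pow_succ, Matrix.mul_apply]
    apply Polynomial.natDegree_sum_le_of_forall_le
    intro l _
    calc ((M ^ k) i l * M l j).natDegree ≤ _ := Polynomial.natDegree_mul_le
    _ ≤ k + 1 := add_le_add (ih i l) (h l j)

set_option maxHeartbeats 1000000 in
/-- Lemma 5 of the paper: if `(A_c, B_c)` is controllable and
`(A_u, B_u)` is not, then for every `λ_max ∈ (0,1)` some convex combination
with `λ ∈ (0, λ_max)` is controllable; in particular, among any `2n²+1`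
distinct values in `(0, λ_max)` one yields a controllable pair. -/
theorem stmt9 (n q : ℕ) (hq : q ≤ n)
    (Ac Au : Matrix (Fin n) (Fin n) ℝ) (Bc Bu : Matrix (Fin n) (Fin q) ℝ)
    (hc : IsControllable Ac Bc) (hu : ¬ IsControllable Au Bu)
    (lammax : ℝ) (hlm : lammax ∈ Set.Ioo (0 : ℝ) 1) :
    (∃ lam ∈ Set.Ioo (0 : ℝ) lammax,
      IsControllable ((1 - lam) • Au + lam • Ac) ((1 - lam) • Bu + lam • Bc)) ∧
    (∀ lam : Fin (2 * n ^ 2 + 1) → ℝ, StrictMono lam →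
      (∀ i, lam i ∈ Set.Ioo (0 : ℝ) lammax) →
      ∃ i, IsControllable ((1 - lam i) • Au + lam i • Ac)
        ((1 - lam i) • Bu + lam i • Bc)) := by
  classical
  -- polynomial matrices
  set AP : Matrix (Fin n) (Fin n) (Polynomial ℝ) :=
    Matrix.of fun i j => C (Au i j) + X * C (Ac i j - Au i j) with hAP
  set BP : Matrix (Fin n) (Fin q) (Polynomial ℝ) :=
    Matrix.of fun i j => C (Bu i j) + X * C (Bc i j - Bu i j) with hBP
  set CP : Matrix (Fin n) (Fin n × Fin q) (Polynomial ℝ) :=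
    Matrix.of fun i jl => (AP ^ (jl.1 : ℕ) * BP) i jl.2 with hCP
  set p : Polynomial ℝ := (CP * CPᵀ).det with hp
  -- evaluation
  have hmap : ∀ lam : ℝ,
      (CP * CPᵀ).map (Polynomial.evalRingHom lam) =
        ctrb ((1 - lam) • Au + lam • Ac) ((1 - lam) • Bu + lam • Bc) *
          (ctrb ((1 - lam) • Au + lam • Ac) ((1 - lam) • Bu + lam • Bc))ᵀ := by
    intro lam
    have hA : AP.map (Polynomial.evalRingHom lam) = (1 - lam) • Au + lam • Ac := by
      ext i j
      simp [hAP, Matrix.map_apply]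
      ring
    have hB : BP.map (Polynomial.evalRingHom lam) = (1 - lam) • Bu + lam • Bc := by
      ext i j
      simp [hBP, Matrix.map_apply]
      ring
    have hC : CP.map (Polynomial.evalRingHom lam) =
        ctrb ((1 - lam) • Au + lam • Ac) ((1 - lam) • Bu + lam • Bc) := by
      ext i jl
      have : (AP ^ (jl.1 : ℕ) * BP).map (Polynomial.evalRingHom lam) =
          ((1 - lam) • Au + lam • Ac) ^ (jl.1 : ℕ) * ((1 - lam) • Bu + lam • Bc) := by
        rw [Matrix.map_mul, ← hA, ← hB]
        congr 1
        have := map_pow (Polynomial.evalRingHom lam).mapMatrix AP (jl.1 : ℕ)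
        simpa [RingHom.mapMatrix_apply] using this
      have h2 := congrFun (congrFun this i) jl.2
      simpa [hCP, ctrb, Matrix.map_apply] using h2
    rw [Matrix.map_mul, hC, Matrix.transpose_map, hC]
  have heval : ∀ lam : ℝ, p.eval lam =
      (ctrb ((1 - lam) • Au + lam • Ac) ((1 - lam) • Bu + lam • Bc) *
        (ctrb ((1 - lam) • Au + lam • Ac) ((1 - lam) • Bu + lam • Bc))ᵀ).det := by
    intro lam
    have := (Polynomial.evalRingHom lam).map_det (CP * CPᵀ)
    rw [RingHom.mapMatrix_apply, hmap lam] at this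
    simpa using this
  -- p is nonzero: at lam = 1 the pair is (Ac, Bc), which is controllable
  have hp1 : p.eval 1 ≠ 0 := by
    rw [heval 1]
    have : (1 - (1:ℝ)) • Au + (1:ℝ) • Ac = Ac := by simp
    rw [this]
    have : (1 - (1:ℝ)) • Bu + (1:ℝ) • Bc = Bc := by simp
    rw [this]
    exact (aux_controllable_iff Ac Bc).mp hc
  have hpne : p ≠ 0 := fun h => hp1 (by simp [h])
  -- degree bound
  have hdeg : p.natDegree ≤ 2 * n ^ 2 := by
    have hCPdeg : ∀ (i : Fin n) (jl : Fin n × Fin q), (CP i jl).natDegree ≤ n := by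
      intro i jl
      have hA1 : ∀ i j, (AP i j).natDegree ≤ 1 := by
        intro i j
        simp only [hAP, Matrix.of_apply]
        refine (Polynomial.natDegree_add_le _ _).trans ?_
        simp [Polynomial.natDegree_mul_le]
        exact (Polynomial.natDegree_mul_le).trans (by simp)
      have := aux_entry_pow_deg AP hA1
      simp only [hCP, Matrix.of_apply, Matrix.mul_apply]
      apply Polynomial.natDegree_sum_le_of_forall_le
      intro l _
      refine (Polynomial.natDegree_mul_le).trans ?_
      have h1 : ((AP ^ (jl.1 : ℕ)) i l).natDegree ≤ (jl.1 : ℕ) := this _ i l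
      have h2 : (BP l jl.2).natDegree ≤ 1 := by
        simp only [hBP, Matrix.of_apply]
        refine (Polynomial.natDegree_add_le _ _).trans ?_
        simp
        exact (Polynomial.natDegree_mul_le).trans (by simp)
      have : (jl.1 : ℕ) + 1 ≤ n := jl.1.2
      omega
    have hMdeg : ∀ (i j : Fin n), ((CP * CPᵀ) i j).natDegree ≤ 2 * n := by
      intro i j
      rw [Matrix.mul_apply]
      apply Polynomial.natDegree_sum_le_of_forall_le
      intro l _
      refine (Polynomial.natDegree_mul_le).trans ?_
      have := hCPdeg i l
      have := hCPdeg j l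
      simp only [Matrix.transpose_apply]
      omega
    rw [hp, Matrix.det_apply']
    apply Polynomial.natDegree_sum_le_of_forall_le
    intro σ _
    refine (Polynomial.natDegree_mul_le).trans ?_
    rw [Polynomial.natDegree_intCast, zero_add]
    refine (Polynomial.natDegree_prod_le _ _).trans ?_
    calc ∑ i : Fin n, ((CP * CPᵀ) (σ i) i).natDegree ≤ ∑ _i : Fin n, 2 * n :=
      Finset.sum_le_sum fun i _ => hMdeg (σ i) i
    _ = 2 * n ^ 2 := by simp [Finset.sum_const]; ring
  -- nonroot implies controllable
  have hkey : ∀ lam : ℝ, p.eval lam ≠ 0 →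
      IsControllable ((1 - lam) • Au + lam • Ac) ((1 - lam) • Bu + lam • Bc) := by
    intro lam h
    rw [heval lam] at h
    exact (aux_controllable_iff _ _).mpr h
  -- part 2
  have part2 : ∀ lam : Fin (2 * n ^ 2 + 1) → ℝ, StrictMono lam →
      (∀ i, lam i ∈ Set.Ioo (0 : ℝ) lammax) →
      ∃ i, IsControllable ((1 - lam i) • Au + lam i • Ac)
        ((1 - lam i) • Bu + lam i • Bc) := by
    intro lam hmono _
    by_contra hcon
    push_neg at hcon
    have hroot : ∀ i, lam i ∈ p.roots.toFinset := by
      intro i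
      rw [Multiset.mem_toFinset, Polynomial.mem_roots hpne]
      by_contra h
      exact hcon i (hkey (lam i) h)
    have hsub : Finset.image lam Finset.univ ⊆ p.roots.toFinset := by
      intro x hx
      rw [Finset.mem_image] at hx
      obtain ⟨i, _, rfl⟩ := hx
      exact hroot i
    have hcard := Finset.card_le_card hsub
    rw [Finset.card_image_of_injective _ hmono.injective, Finset.card_univ,
      Fintype.card_fin] at hcard
    have : p.roots.toFinset.card ≤ p.natDegree :=
      (Multiset.toFinset_card_le _).trans (Polynomial.card_roots' p)
    omega
  refine ⟨?_, part2⟩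
  -- part 1 from part 2
  obtain ⟨hl0, hl1⟩ := hlm
  set N : ℕ := 2 * n ^ 2 + 1 with hN
  have hNpos : (0:ℝ) < N + 1 := by positivity
  set lamf : Fin N → ℝ := fun i => lammax * ((i : ℕ) + 1) / (N + 1) with hlamf
  have hmem : ∀ i, lamf i ∈ Set.Ioo (0:ℝ) lammax := by
    intro i
    constructor
    · apply div_pos _ hNpos
      positivity
    · rw [div_lt_iff₀ hNpos]
      have h1 : ((i : ℕ) : ℝ) + 1 ≤ (N : ℝ) := by exact_mod_cast i.2
      nlinarith
  have hmono : StrictMono lamf := by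
    intro i j hij
    simp only [hlamf]
    have h : ((i : ℕ) : ℝ) + 1 < ((j : ℕ) : ℝ) + 1 := by
      have : (i : ℕ) < (j : ℕ) := hij
      push_cast
      linarith [(Nat.cast_lt (α := ℝ)).mpr this]
    gcongr
  obtain ⟨i, hi⟩ := part2 lamf hmono hmem
  exact ⟨lamf i, hmem i, hi⟩
end

section
/- Let x(k) ∈ ℝ^{n̄}, u(k) ∈ ℝ^{q̄} satisfy x(k+1) = A x(k) + B u(k) for all k ∈ ℕ for some matrices A, B (Assumption EXO). Let A(k) ∈ ℝ^{n̄×n̄}, B(k) ∈ ℝ^{n̄×q̄} be matrix sequences with A(k) → Â and B(k) → B̂ as k → ∞, and suppose that for every k there are residual vectors e*_1(k),…,e*_{N̄}(k) with x(j) = A(k)x(j−1) + B(k)u(j−1) + e*_{j−k+N̄}(k) for j = k−N̄+1,…,k, and e*_j(k) → 0 as k → ∞ for each j. Then there exist nonnegative sequences ω_1(k), ω_2(k), ω_3(k) converging to zero such that for all k ∈ ℕ and all i = 0,…,N̄−1, the i-step prediction error e_i(k) := Â^i x(k) + Σ_{l=0}^{i−1} Â^{i−1−l}B̂ u(k+l)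 − x(k+i) satisfies ‖e_i(k)‖² ≤ ω_1(k) + ω_2(k)‖x(k)‖² + ω_3(k) Σ_{l=0}^{i−1} ‖u(k+l)‖². -/
/-!
Run the fitted window of time `k + N̄ - 1` as a recursion started at `x(k)`: unrolling it writes
`x(k+i)` through the powers of `A(k + N̄ - 1)`, `B(k + N̄ - 1)` and the residuals. Subtracting this
from the predictor built from `Â, B̂` leaves three terms, bounded by `‖A^i - Â^i‖ ‖x(k)‖`,
`max_j ‖A^j B - Â^j B̂‖ ∑ ‖u(k+l)‖` and `i max_j ‖A^j‖ max_l ‖e*_l‖`; the coefficients vanish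
because the window matrices converge and the residuals vanish. Cauchy–Schwarz and
`(a + b + c)² ≤ 3 (a² + b² + c²)` give the squared form.
-/

open Matrix Filter Topology Finset
open scoped Matrix.Norms.Operator

namespace Matrix

variable {R m p : Type*} [Fintype m] [Fintype p] [DecidableEq m]

/-- The `i`-step predictor of the signal model `x(k+1) = M x(k) + N u(k)` started at `x₀`. -/
def predictor [Semiring R] (M : Matrix m m R) (N : Matrix m p R) (x₀ : m → R) (u : ℕ → p → R)
    (i : ℕ) : m → R :=
  (M ^ i) *ᵥ x₀ + ∑ l ∈ range i, (M ^ (i - 1 - l) * N) *ᵥ u l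

lemma eq_pow_mulVec_add_sum_of_forall_lt [CommSemiring R] {M : Matrix m m R} {y w : ℕ → m → R}
    {n : ℕ} (hy : ∀ l < n, y (l + 1) = M *ᵥ y l + w l) :
    y n = (M ^ n) *ᵥ y 0 + ∑ l ∈ range n, (M ^ (n - 1 - l)) *ᵥ w l := by
  induction n with
  | zero => simp
  | succ n ih =>
    have hpow : ∀ l ∈ range n, M *ᵥ (M ^ (n - 1 - l)) *ᵥ w l = (M ^ (n + 1 - 1 - l)) *ᵥ w l := by
      intro l hl
      rw [mulVec_mulVec, ← pow_succ', show n - 1 - l + 1 = n + 1 - 1 - l by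
        have := mem_range.1 hl; omega]
    rw [hy n (by omega), ih fun l hl => hy l (by omega), mulVec_add, mulVec_mulVec, ← pow_succ',
      mulVec_sum, sum_congr rfl hpow, sum_range_succ, Nat.add_sub_cancel, Nat.sub_self, pow_zero,
      one_mulVec, add_assoc]

lemma predictor_sub_eq_of_forall_lt [CommRing R] {M A : Matrix m m R} {N B : Matrix m p R}
    {y e : ℕ → m → R} {v : ℕ → p → R} {i : ℕ}
    (hy : ∀ l < i, y (l + 1) = M *ᵥ y l + N *ᵥ v l + e l) :
    predictor A B (y 0) v i - y i =
      (A ^ i - M ^ i) *ᵥ y 0 + ∑ l ∈ range i, (A ^ (i - 1 - l) * B - M ^ (i - 1 - l) * N) *ᵥ v l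
        - ∑ l ∈ range i, (M ^ (i - 1 - l)) *ᵥ e l := by
  have hyi := eq_pow_mulVec_add_sum_of_forall_lt (y := y) (M := M)
    (w := fun l => N *ᵥ v l + e l) fun l hl => by rw [hy l hl, add_assoc]
  rw [hyi]
  simp only [predictor, sub_mulVec, mulVec_add, ← mulVec_mulVec, sum_add_distrib, sum_sub_distrib]
  abel

end Matrix

section PredictionError

variable {ι m p : Type*} [Fintype m] [Fintype p]

lemma sq_norm_sum_mulVec_le (s : Finset ι) {F : ι → Matrix m p ℝ} {v : ι → p → ℝ} {b : ℝ}
    (hF : ∀ l ∈ s, ‖F l‖ ≤ b) :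
    ‖∑ l ∈ s, F l *ᵥ v l‖ ^ 2 ≤ #s * b ^ 2 * ∑ l ∈ s, ‖v l‖ ^ 2 := by
  have hle : ‖∑ l ∈ s, F l *ᵥ v l‖ ≤ b * ∑ l ∈ s, ‖v l‖ := by
    rw [mul_sum]
    refine norm_sum_le_of_le s fun l hl => (linfty_opNorm_mulVec _ _).trans ?_
    exact mul_le_mul_of_nonneg_right (hF l hl) (norm_nonneg _)
  calc ‖∑ l ∈ s, F l *ᵥ v l‖ ^ 2 ≤ b ^ 2 * (∑ l ∈ s, ‖v l‖) ^ 2 := by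
        rw [← mul_pow]; exact pow_le_pow_left₀ (norm_nonneg _) hle 2
    _ ≤ b ^ 2 * (#s * ∑ l ∈ s, ‖v l‖ ^ 2) :=
        mul_le_mul_of_nonneg_left (sq_sum_le_card_mul_sum_sq ..) (sq_nonneg b)
    _ = #s * b ^ 2 * ∑ l ∈ s, ‖v l‖ ^ 2 := by ring

variable [DecidableEq m]

lemma norm_sum_pow_mulVec_le {M : Matrix m m ℝ} {e : ℕ → m → ℝ} {i : ℕ} {μ ε : ℝ}
    (hM : ∀ j < i, ‖M ^ j‖ ≤ μ) (he : ∀ l < i, ‖e l‖ ≤ ε) :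
    ‖∑ l ∈ range i, (M ^ (i - 1 - l)) *ᵥ e l‖ ≤ i * (μ * ε) := by
  calc ‖∑ l ∈ range i, (M ^ (i - 1 - l)) *ᵥ e l‖ ≤ ∑ _l ∈ range i, μ * ε :=
        norm_sum_le_of_le _ fun l hl => by
          have hl : l < i := mem_range.1 hl
          exact (linfty_opNorm_mulVec _ _).trans <| mul_le_mul (hM _ (by omega)) (he l hl)
            (norm_nonneg _) ((norm_nonneg _).trans (hM _ (by omega)))
    _ = i * (μ * ε) := by rw [sum_const, card_range, nsmul_eq_mul]

theorem sq_norm_predictor_sub_le {M A : Matrix m m ℝ} {N B : Matrix m p ℝ} {y e : ℕ → m → ℝ}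
    {v : ℕ → p → ℝ} {i : ℕ} {a b μ ε : ℝ}
    (hy : ∀ l < i, y (l + 1) = M *ᵥ y l + N *ᵥ v l + e l)
    (ha : ‖M ^ i - A ^ i‖ ≤ a) (hb : ∀ j < i, ‖M ^ j * N - A ^ j * B‖ ≤ b)
    (hM : ∀ j < i, ‖M ^ j‖ ≤ μ) (he : ∀ l < i, ‖e l‖ ≤ ε) :
    ‖predictor A B (y 0) v i - y i‖ ^ 2
      ≤ 3 * (i * (μ * ε)) ^ 2 + 3 * a ^ 2 * ‖y 0‖ ^ 2
        + 3 * (i * b ^ 2) * ∑ l ∈ range i, ‖v l‖ ^ 2 := by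
  rw [predictor_sub_eq_of_forall_lt hy]
  set X := (A ^ i - M ^ i) *ᵥ y 0
  set U := ∑ l ∈ range i, (A ^ (i - 1 - l) * B - M ^ (i - 1 - l) * N) *ᵥ v l
  set E := ∑ l ∈ range i, (M ^ (i - 1 - l)) *ᵥ e l
  have hX : ‖X‖ ^ 2 ≤ a ^ 2 * ‖y 0‖ ^ 2 := by
    rw [← mul_pow]
    refine pow_le_pow_left₀ (norm_nonneg _) ((linfty_opNorm_mulVec _ _).trans ?_) 2
    exact mul_le_mul_of_nonneg_right (norm_sub_rev (M ^ i) _ ▸ ha) (norm_nonneg _)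
  have hU : ‖U‖ ^ 2 ≤ i * b ^ 2 * ∑ l ∈ range i, ‖v l‖ ^ 2 := by
    simpa using sq_norm_sum_mulVec_le (range i) fun l hl => by
      rw [norm_sub_rev]; exact hb _ (by have := mem_range.1 hl; omega)
  have hE : ‖E‖ ^ 2 ≤ (i * (μ * ε)) ^ 2 :=
    pow_le_pow_left₀ (norm_nonneg _) (norm_sum_pow_mulVec_le hM he) 2
  have hXUE : ‖X + U - E‖ ≤ ‖X‖ + ‖U‖ + ‖E‖ :=
    (norm_sub_le _ _).trans (add_le_add_left (norm_add_le _ _) _)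
  nlinarith [pow_le_pow_left₀ (norm_nonneg _) hXUE 2, sq_nonneg (‖X‖ - ‖U‖),
    sq_nonneg (‖X‖ - ‖E‖), sq_nonneg (‖U‖ - ‖E‖)]

end PredictionError

/-- Shifting the fitting window of time `k + (N - 1)` back to start at time `k` turns its
equations `2, …, N` into a one-step recursion for `l ↦ x (k + l)`. -/
lemma recursion_of_window {R m p : Type*} [Semiring R] [Fintype m] [Fintype p] {N : ℕ}
    {x : ℤ → m → R} {u : ℤ → p → R} {A : ℕ → Matrix m m R} {B : ℕ → Matrix m p R}
    {e : ℕ → ℕ → m → R}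
    (hres : ∀ k j : ℕ, 1 ≤ j → j ≤ N →
      x ((k : ℤ) - N + j)
        = A k *ᵥ x ((k : ℤ) - N + j - 1) + B k *ᵥ u ((k : ℤ) - N + j - 1) + e k j)
    (k l : ℕ) (hl : l + 1 < N) :
    x (k + (l + 1 : ℕ)) = A (k + (N - 1)) *ᵥ x (k + l) + B (k + (N - 1)) *ᵥ u (k + l)
      + e (k + (N - 1)) (l + 2) := by
  have h := hres (k + (N - 1)) (l + 2) (by omega) (by omega)
  rwa [show ((k + (N - 1) : ℕ) : ℤ) - N + (l + 2 : ℕ) = k + (l + 1 : ℕ) by omega,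
    show ((k : ℤ) + (l + 1 : ℕ)) - 1 = k + l by omega] at h

theorem stmt12_general (nb qb Nb : ℕ)
    (x : ℤ → Fin nb → ℝ) (u : ℤ → Fin qb → ℝ)
    -- the estimated matrices and their limits
    (A : ℕ → Matrix (Fin nb) (Fin nb) ℝ) (B : ℕ → Matrix (Fin nb) (Fin qb) ℝ)
    (Ahat : Matrix (Fin nb) (Fin nb) ℝ) (Bhat : Matrix (Fin nb) (Fin qb) ℝ)
    (hA : Tendsto A atTop (nhds Ahat)) (hB : Tendsto B atTop (nhds Bhat))
    -- residuals of the window equations, vanishing as k → ∞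
    (estar : ℕ → ℕ → Fin nb → ℝ)
    (hres : ∀ (k : ℕ) (j : ℕ), 1 ≤ j → j ≤ Nb →
      x ((k : ℤ) - (Nb : ℤ) + j)
        = (A k).mulVec (x ((k : ℤ) - (Nb : ℤ) + j - 1))
          + (B k).mulVec (u ((k : ℤ) - (Nb : ℤ) + j - 1)) + estar k j)
    (hresto : ∀ j : ℕ, Tendsto (fun k => estar k j) atTop (nhds 0)) :
    ∃ ω1 ω2 ω3 : ℕ → ℝ,
      (∀ k, 0 ≤ ω1 k) ∧ (∀ k, 0 ≤ ω2 k) ∧ (∀ k, 0 ≤ ω3 k) ∧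
      Tendsto ω1 atTop (nhds 0) ∧ Tendsto ω2 atTop (nhds 0) ∧
      Tendsto ω3 atTop (nhds 0) ∧
      ∀ (k : ℕ) (i : ℕ), i < Nb →
        ‖(Ahat ^ i).mulVec (x (k : ℤ))
            + (∑ l ∈ Finset.range i,
                (Ahat ^ (i - 1 - l) * Bhat).mulVec (u ((k : ℤ) + l)))
            - x ((k : ℤ) + i)‖ ^ 2
          ≤ ω1 k + ω2 k * ‖x (k : ℤ)‖ ^ 2
            + ω3 k * ∑ l ∈ Finset.range i, ‖u ((k : ℤ) + l)‖ ^ 2 := by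
  set κ : ℕ → ℕ := fun k => k + (Nb - 1)
  have hκ : Tendsto κ atTop atTop := tendsto_add_atTop_nat _
  set P : ℕ → Fin Nb → Matrix (Fin nb) (Fin nb) ℝ := fun k j => A (κ k) ^ (j : ℕ)
  set Q : ℕ → Fin Nb → Matrix (Fin nb) (Fin qb) ℝ := fun k j => A (κ k) ^ (j : ℕ) * B (κ k)
  set E : ℕ → Fin (Nb + 1) → Fin nb → ℝ := fun k j => estar (κ k) j
  set P₀ : Fin Nb → Matrix (Fin nb) (Fin nb) ℝ := fun j => Ahat ^ (j : ℕ)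
  set Q₀ : Fin Nb → Matrix (Fin nb) (Fin qb) ℝ := fun j => Ahat ^ (j : ℕ) * Bhat
  have hP : Tendsto P atTop (𝓝 P₀) :=
    tendsto_pi_nhds.2 fun j => (hA.comp hκ).pow j
  have hQ : Tendsto Q atTop (𝓝 Q₀) :=
    tendsto_pi_nhds.2 fun j => ((continuous_fst.matrix_mul continuous_snd).tendsto _).comp
      (((hA.comp hκ).pow j).prodMk_nhds (hB.comp hκ))
  have hE : Tendsto E atTop (𝓝 0) := tendsto_pi_nhds.2 fun j => (hresto j).comp hκ
  refine ⟨fun k => 3 * (Nb * (‖P k‖ * ‖E k‖)) ^ 2, fun k => 3 * ‖P k - P₀‖ ^ 2,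
    fun k => 3 * (Nb * ‖Q k - Q₀‖ ^ 2),
    fun k => by positivity, fun k => by positivity, fun k => by positivity, ?_, ?_, ?_,
    fun k i hi => ?_⟩
  · simpa using (((hP.norm.mul hE.norm).const_mul (Nb : ℝ)).pow 2).const_mul 3
  · simpa using ((tendsto_iff_norm_sub_tendsto_zero.1 hP).pow 2).const_mul 3
  · simpa using
      (((tendsto_iff_norm_sub_tendsto_zero.1 hQ).pow 2).const_mul (Nb : ℝ)).const_mul 3
  have hbound := sq_norm_predictor_sub_le (A := Ahat) (B := Bhat) (y := fun l : ℕ => x (k + l))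
    (v := fun l : ℕ => u (k + l)) (e := fun l => estar (κ k) (l + 2)) (i := i)
    (fun l hl => recursion_of_window hres k l (by omega))
    (norm_le_pi_norm (P k - P₀) ⟨i, hi⟩) (fun j hj => norm_le_pi_norm (Q k - Q₀) ⟨j, by omega⟩)
    (fun j hj => norm_le_pi_norm (P k) ⟨j, by omega⟩)
    (fun l hl => norm_le_pi_norm (E k) ⟨l + 2, by omega⟩)
  rw [Nat.cast_zero, add_zero] at hbound
  refine hbound.trans ?_
  beta_reduce
  gcongr

/-- Theorem 2(ii) of the paper: if the data satisfy Assumption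
EXO and the estimated matrices `A(k), B(k)` converge and fit the data over a
window of length `N̄` with vanishing residuals, then the `i`-step predictors
built from the limits `Â, B̂` are asymptotically accurate along the data:
the squared prediction errors are bounded by vanishing sequences
`ω_1(k) + ω_2(k)‖x(k)‖² + ω_3(k)∑‖u(k+l)‖²`. -/
theorem stmt12 (nb qb Nb : ℕ)
    (x : ℤ → Fin nb → ℝ) (u : ℤ → Fin qb → ℝ)
    (hx0 : ∀ k : ℤ, k < 0 → x k = 0) (hu0 : ∀ k : ℤ, k < 0 → u k = 0)
    -- Assumption EXO
    (Am : Matrix (Fin nb) (Fin nb) ℝ) (Bm : Matrix (Fin nb) (Fin qb) ℝ)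
    (hEXO : ∀ k : ℤ, 0 ≤ k → x (k + 1) = Am.mulVec (x k) + Bm.mulVec (u k))
    -- the estimated matrices and their limits
    (A : ℕ → Matrix (Fin nb) (Fin nb) ℝ) (B : ℕ → Matrix (Fin nb) (Fin qb) ℝ)
    (Ahat : Matrix (Fin nb) (Fin nb) ℝ) (Bhat : Matrix (Fin nb) (Fin qb) ℝ)
    (hA : Tendsto A atTop (nhds Ahat)) (hB : Tendsto B atTop (nhds Bhat))
    -- residuals of the window equations, vanishing as k → ∞
    (estar : ℕ → ℕ → Fin nb → ℝ)
    (hres : ∀ (k : ℕ) (j : ℕ), 1 ≤ j → j ≤ Nb →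
      x ((k : ℤ) - (Nb : ℤ) + j)
        = (A k).mulVec (x ((k : ℤ) - (Nb : ℤ) + j - 1))
          + (B k).mulVec (u ((k : ℤ) - (Nb : ℤ) + j - 1)) + estar k j)
    (hresto : ∀ j : ℕ, Tendsto (fun k => estar k j) atTop (nhds 0)) :
    ∃ ω1 ω2 ω3 : ℕ → ℝ,
      (∀ k, 0 ≤ ω1 k) ∧ (∀ k, 0 ≤ ω2 k) ∧ (∀ k, 0 ≤ ω3 k) ∧
      Tendsto ω1 atTop (nhds 0) ∧ Tendsto ω2 atTop (nhds 0) ∧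
      Tendsto ω3 atTop (nhds 0) ∧
      ∀ (k : ℕ) (i : ℕ), i < Nb →
        ‖(Ahat ^ i).mulVec (x (k : ℤ))
            + (∑ l ∈ Finset.range i,
                (Ahat ^ (i - 1 - l) * Bhat).mulVec (u ((k : ℤ) + l)))
            - x ((k : ℤ) + i)‖ ^ 2
          ≤ ω1 k + ω2 k * ‖x (k : ℤ)‖ ^ 2
            + ω3 k * ∑ l ∈ Finset.range i, ‖u ((k : ℤ) + l)‖ ^ 2 :=
  stmt12_general nb qb Nb x u A B Ahat Bhat hA hB estar hres hresto
end
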